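/- arXiv:1108.2427 — 2 statements merged into one kernel-verified Lean document; each statement's English description precedes it below -/
import Mathlib

section
/- Let A₁ be a deterministic finite automaton with n₁ states accepting L₁ and let A₂ be a deterministic finite automaton with n₂ states accepting overline(L₂) = { overline(w) : w ∈ L₂ }. Then there exists a context-free grammar G generating H_κ(L₁,L₂) such that the right-hand side of every production rule of G contains at most one nonterminal symbol and G has at most (|Σ|^κ + 2·|Σ|)·n₁²·n₂² + n₁·n₂ production rules. -/
/-- The antimorphic extension of an involution on letters to words. -/
def ovr {σ : Type} (bar : σ → σ) (w : List σ) : List σ := (w.map bar).reverse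

/-- The hairpin completion `H_κ(L₁, L₂)`. -/
def hairpinCompletion {σ : Type} (bar : σ → σ) (κ : ℕ) (L1 L2 : Language σ) :
    Language σ :=
  { π | ∃ γ α β : List σ,
      π = γ ++ α ++ β ++ ovr bar α ++ ovr bar γ ∧
      κ ≤ α.length ∧
      (γ ++ α ++ β ++ ovr bar α ∈ L1 ∨ α ++ β ++ ovr bar α ++ ovr bar γ ∈ L2) }

/-- A symbol is a nonterminal. -/
def isNonterminal {T N : Type*} : Symbol T N → Bool
  | Symbol.nonterminal _ => true
  | Symbol.terminal _ => false

/-!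
The grammar generates a hairpin `γ α β ᾱ γ̄` from the outside in while running `A₁` on `γ α β ᾱ`
and `A₂` on `γ α β̄ ᾱ`, the image under `¯` of the candidate `α β ᾱ γ̄` for `L₂`.
A nonterminal `inl (p₁, p₂)` holds the states reached after `γ`. The stem rule emits `α ⋯ ᾱ` with
`|α| = κ` and guesses the states `s` of `A₁` after `γ α β` and `u` of `A₂` after `γ α β̄`, keeping
only guesses from which one of the automata accepts `ᾱ`. The nonterminal `inr (q, s, t, u)` then
emits `β` letter by letter, running `A₁` forward from `q` and `A₂` backward from `u`, while `t`
remembers the state of `A₂` after `γ α`; erasing `inr (s, s, t, t)` confirms both guesses. Every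
rule has at most one nonterminal, and the four kinds of rules number at most `|Σ| n₁ n₂`,
`|Σ|^κ n₁² n₂²`, `|Σ| n₁² n₂²` and `n₁ n₂`.
-/

section Ovr

variable {σ : Type} (bar : σ → σ)

@[simp] lemma ovr_nil : ovr bar [] = [] := rfl

@[simp] lemma ovr_cons (a : σ) (w : List σ) : ovr bar (a :: w) = ovr bar w ++ [bar a] := by
  simp [ovr]

@[simp] lemma ovr_append (u v : List σ) : ovr bar (u ++ v) = ovr bar v ++ ovr bar u := by
  simp [ovr]

variable {bar}

lemma ovr_ovr (hbar : Function.Involutive bar) (w : List σ) : ovr bar (ovr bar w) = w := by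
  simp [ovr, List.map_reverse, hbar.comp_self]

lemma exists_mem_eq_ovr_iff (hbar : Function.Involutive bar) {L : Language σ} {w : List σ} :
    (∃ v ∈ L, w = ovr bar v) ↔ ovr bar w ∈ L :=
  ⟨by rintro ⟨v, hv, rfl⟩; rwa [ovr_ovr hbar], fun h => ⟨_, h, (ovr_ovr hbar w).symm⟩⟩

end Ovr

-- Any `α` longer than `κ` can be cut to length `κ`, the rest moving into the loop `β`.
lemma mem_hairpinCompletion_iff {σ : Type} {bar : σ → σ} {κ : ℕ} {L1 L2 : Language σ}
    {π : List σ} :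
    π ∈ hairpinCompletion bar κ L1 L2 ↔
      ∃ γ α β : List σ, π = γ ++ α ++ β ++ ovr bar α ++ ovr bar γ ∧ α.length = κ ∧
        (γ ++ α ++ β ++ ovr bar α ∈ L1 ∨ α ++ β ++ ovr bar α ++ ovr bar γ ∈ L2) := by
  constructor
  · rintro ⟨γ, α, β, rfl, hκ, hmem⟩
    obtain ⟨α₁, α₂, rfl, hα₁⟩ : ∃ α₁ α₂, α = α₁ ++ α₂ ∧ α₁.length = κ :=
      ⟨α.take κ, α.drop κ, by simp, by simpa⟩
    exact ⟨γ, α₁, α₂ ++ β ++ ovr bar α₂, by simp, hα₁, by simpa using hmem⟩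
  · rintro ⟨γ, α, β, rfl, rfl, hmem⟩
    exact ⟨γ, α, β, rfl, le_rfl, hmem⟩

namespace ContextFreeRule

variable {T N : Type*}

def linear (X : N) (x : List T) (Y : N) (y : List T) : ContextFreeRule T N :=
  ⟨X, x.map .terminal ++ [.nonterminal Y] ++ y.map .terminal⟩

def terminating (X : N) (w : List T) : ContextFreeRule T N :=
  ⟨X, w.map .terminal⟩

lemma countP_isNonterminal_map_terminal (w : List T) :
    (w.map (Symbol.terminal (N := N))).countP isNonterminal = 0 := by
  simp [List.countP_eq_zero, isNonterminal]

lemma countP_isNonterminal_linear_output (X : N) (x : List T) (Y : N) (y : List T) :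
    (linear X x Y y).output.countP isNonterminal = 1 := by
  simp only [linear, List.countP_append, countP_isNonterminal_map_terminal]
  rfl

lemma countP_isNonterminal_terminating_output (X : N) (w : List T) :
    (terminating X w).output.countP isNonterminal = 0 :=
  countP_isNonterminal_map_terminal w

end ContextFreeRule

namespace ContextFreeGrammar

variable {T : Type*}

lemma eq_of_map_terminal_append_nonterminal_eq {N : Type*} {u v : List T}
    {p q : List (Symbol T N)} {X Y : N}
    (h : u.map .terminal ++ [.nonterminal X] ++ v.map .terminal = p ++ [.nonterminal Y] ++ q) :
    p = u.map .terminal ∧ X = Y ∧ q = v.map .terminal := by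
  simp only [List.append_assoc, List.singleton_append] at h
  obtain ⟨hp, hX, hq⟩ := (List.append_cons_inj_of_notMem (by simp) (by simp)).1 h
  exact ⟨hp.symm, Symbol.nonterminal.inj hX, hq.symm⟩

variable {g : ContextFreeGrammar T}

lemma produces_input_output {r : ContextFreeRule T g.NT} (hr : r ∈ g.rules) :
    g.Produces [.nonterminal r.input] r.output :=
  ⟨r, hr, .input_output⟩

/-- Soundness of a linear grammar from an invariant `P X u v` of its sentential forms `u X v`. -/
theorem language_le_of_invariant (P : g.NT → List T → List T → Prop) {L : Language T}
    (hinit : P g.initial [] [])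
    (hrule : ∀ r ∈ g.rules, ∀ u v, P r.input u v →
      (∃ w, r.output = w.map .terminal ∧ u ++ w ++ v ∈ L) ∨
      ∃ Y x y, r.output = x.map .terminal ++ [.nonterminal Y] ++ y.map .terminal ∧
        P Y (u ++ x) (y ++ v)) :
    g.language ≤ L := by
  let Good (s : List (Symbol T g.NT)) : Prop :=
    (∃ w ∈ L, s = w.map .terminal) ∨
      ∃ X u v, s = u.map .terminal ++ [.nonterminal X] ++ v.map .terminal ∧ P X u v
  have hproduces {s s'} (h : g.Produces s s') (hs : Good s) : Good s' := by
    obtain ⟨r, hr, hrw⟩ := h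
    rcases hs with ⟨w, -, rfl⟩ | ⟨X, u, v, rfl, hP⟩
    · simpa using hrw.nonterminal_input_mem
    obtain ⟨p, q, hs, rfl⟩ := hrw.exists_parts
    obtain ⟨rfl, rfl, rfl⟩ := eq_of_map_terminal_append_nonterminal_eq hs
    rcases hrule r hr u v hP with ⟨w, hw, hL⟩ | ⟨Y, x, y, hout, hY⟩
    · exact .inl ⟨_, hL, by simp [hw]⟩
    · exact .inr ⟨Y, u ++ x, y ++ v, by simp [hout], hY⟩
  have hderives {s} (h : g.Derives [.nonterminal g.initial] s) : Good s := by
    induction h with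
    | refl => exact .inr ⟨g.initial, [], [], rfl, hinit⟩
    | tail _ hstep ih => exact hproduces hstep ih
  intro w hw
  rcases hderives hw with ⟨w', hw', hww'⟩ | ⟨X, u, v, hw', -⟩
  · rwa [List.map_injective_iff.2 (fun _ _ => Symbol.terminal.inj) hww']
  · have : Symbol.nonterminal X ∈ w.map (Symbol.terminal (N := g.NT)) := by simp [hw']
    simp at this

end ContextFreeGrammar

namespace HairpinGrammar

open ContextFreeRule ContextFreeGrammar

variable {σ Q1 Q2 : Type} (bar : σ → σ) (A1 : DFA σ Q1) (A2 : DFA σ Q2) (κ : ℕ)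

abbrev NT (Q1 Q2 : Type) : Type := (Q1 × Q2) ⊕ (Q1 × Q1 × Q2 × Q2)

def outerRule (p : Q1 × Q2) (a : σ) : ContextFreeRule σ (NT Q1 Q2) :=
  linear (.inl p) [a] (.inl (A1.step p.1 a, A2.step p.2 a)) [bar a]

def stemRule (p : Q1 × Q2) (s : Q1) (u : Q2) (α : List σ) : ContextFreeRule σ (NT Q1 Q2) :=
  linear (.inl p) α (.inr (A1.evalFrom p.1 α, s, A2.evalFrom p.2 α, u)) (ovr bar α)

def loopRule (x : Q1 × Q1 × Q2 × Q2) (a : σ) : ContextFreeRule σ (NT Q1 Q2) :=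
  linear (.inr (x.1, x.2.1, x.2.2.1, A2.step x.2.2.2 (bar a))) [a]
    (.inr (A1.step x.1 a, x.2.1, x.2.2.1, x.2.2.2)) []

def closeRule (q : Q1) (t : Q2) : ContextFreeRule σ (NT Q1 Q2) :=
  terminating (.inr (q, q, t, t)) []

def StemAccepts (s : Q1) (u : Q2) (α : List σ) : Prop :=
  A1.evalFrom s (ovr bar α) ∈ A1.accept ∨ A2.evalFrom u (ovr bar α) ∈ A2.accept

def hairpinLanguage : Language σ :=
  {π | ∃ γ α β, π = γ ++ α ++ β ++ ovr bar α ++ ovr bar γ ∧ α.length = κ ∧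
    StemAccepts bar A1 A2 (A1.eval (γ ++ α ++ β)) (A2.eval (γ ++ α ++ ovr bar β)) α}

def Invariant : NT Q1 Q2 → List σ → List σ → Prop
  | .inl p, u, v => p = (A1.eval u, A2.eval u) ∧ v = ovr bar u
  | .inr (q, s, t, x), u, v => ∃ γ α β, u = γ ++ α ++ β ∧ v = ovr bar α ++ ovr bar γ ∧
      α.length = κ ∧ q = A1.eval u ∧ t = A2.eval (γ ++ α) ∧
      StemAccepts bar A1 A2 s (A2.evalFrom x (ovr bar β)) α

section Grammar

variable [Fintype σ] [Fintype Q1] [Fintype Q2]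

open Classical in
noncomputable def rules : Finset (ContextFreeRule σ (NT Q1 Q2)) :=
  (Finset.univ.image fun x : (Q1 × Q2) × σ => outerRule bar A1 A2 x.1 x.2) ∪
  ((Finset.univ.filter fun x : (Q1 × Q2) × Q1 × Q2 × List.Vector σ κ =>
      StemAccepts bar A1 A2 x.2.1 x.2.2.1 x.2.2.2.toList).image
    fun x => stemRule bar A1 A2 x.1 x.2.1 x.2.2.1 x.2.2.2.toList) ∪
  (Finset.univ.image fun x : (Q1 × Q1 × Q2 × Q2) × σ => loopRule bar A1 A2 x.1 x.2) ∪
  (Finset.univ.image fun x : Q1 × Q2 => closeRule x.1 x.2)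

noncomputable abbrev grammar : ContextFreeGrammar σ :=
  ⟨NT Q1 Q2, .inl (A1.start, A2.start), rules bar A1 A2 κ⟩

variable {bar A1 A2 κ}

lemma mem_rules {r : ContextFreeRule σ (NT Q1 Q2)} :
    r ∈ rules bar A1 A2 κ ↔
      (∃ p a, r = outerRule bar A1 A2 p a) ∨
      (∃ p s u α, α.length = κ ∧ StemAccepts bar A1 A2 s u α ∧ r = stemRule bar A1 A2 p s u α) ∨
      (∃ x a, r = loopRule bar A1 A2 x a) ∨
      ∃ q t, r = closeRule q t := by
  classical
  simp only [rules, Finset.mem_union, Finset.mem_image, Finset.mem_filter, Finset.mem_univ,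
    true_and]
  constructor
  · rintro (((⟨⟨p, a⟩, rfl⟩ | ⟨⟨p, s, u, α⟩, hacc, rfl⟩) | ⟨⟨x, a⟩, rfl⟩) | ⟨⟨q, t⟩, rfl⟩)
    exacts [.inl ⟨p, a, rfl⟩, .inr (.inl ⟨p, s, u, α.toList, α.toList_length, hacc, rfl⟩),
      .inr (.inr (.inl ⟨x, a, rfl⟩)), .inr (.inr (.inr ⟨q, t, rfl⟩))]
  · rintro (⟨p, a, rfl⟩ | ⟨p, s, u, α, hα, hacc, rfl⟩ | ⟨x, a, rfl⟩ | ⟨q, t, rfl⟩)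
    exacts [.inl (.inl (.inl ⟨(p, a), rfl⟩)), .inl (.inl (.inr ⟨(p, s, u, ⟨α, hα⟩), hacc, rfl⟩)),
      .inl (.inr ⟨(x, a), rfl⟩), .inr ⟨(q, t), rfl⟩]

lemma countP_isNonterminal_le_one {r : ContextFreeRule σ (NT Q1 Q2)}
    (hr : r ∈ rules bar A1 A2 κ) : r.output.countP isNonterminal ≤ 1 := by
  rcases mem_rules.1 hr with ⟨p, a, rfl⟩ | ⟨p, s, u, α, -, -, rfl⟩ | ⟨x, a, rfl⟩ | ⟨q, t, rfl⟩
  iterate 3 exact (countP_isNonterminal_linear_output ..).le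
  exact (countP_isNonterminal_terminating_output ..).trans_le zero_le_one

theorem card_rules_le :
    (rules bar A1 A2 κ).card ≤
      (Fintype.card σ ^ κ + 2 * Fintype.card σ) * Fintype.card Q1 ^ 2 * Fintype.card Q2 ^ 2 +
        Fintype.card Q1 * Fintype.card Q2 := by
  classical
  have : Nonempty Q1 := ⟨A1.start⟩
  have : Nonempty Q2 := ⟨A2.start⟩
  have hsquare : Fintype.card Q1 * Fintype.card Q2 ≤ Fintype.card Q1 ^ 2 * Fintype.card Q2 ^ 2 :=
    Nat.mul_le_mul (Nat.le_self_pow two_ne_zero _) (Nat.le_self_pow two_ne_zero _)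
  unfold rules
  grw [Finset.card_union_le, Finset.card_union_le, Finset.card_union_le, Finset.card_image_le,
    Finset.card_image_le, Finset.card_filter_le, Finset.card_image_le, Finset.card_image_le]
  simp only [Finset.card_univ, Fintype.card_prod, card_vector]
  nlinarith [hsquare]

lemma language_le_hairpinLanguage :
    (grammar bar A1 A2 κ).language ≤ hairpinLanguage bar A1 A2 κ := by
  refine language_le_of_invariant (Invariant bar A1 A2 κ) ⟨rfl, rfl⟩ ?_
  intro r hr u v hP
  rcases mem_rules.1 hr with ⟨p, a, rfl⟩ | ⟨p, s, x, α, hα, hacc, rfl⟩ | ⟨⟨q, s, t, x⟩, a, rfl⟩ |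
    ⟨q, t, rfl⟩
  · obtain ⟨rfl, rfl⟩ := hP
    exact .inr ⟨_, [a], [bar a], rfl, by simp [Invariant]⟩
  · obtain ⟨rfl, rfl⟩ := hP
    exact .inr ⟨_, α, ovr bar α, rfl, u, α, [], by simp, rfl, hα,
      by simp [DFA.eval, DFA.evalFrom_of_append], by simp [DFA.eval, DFA.evalFrom_of_append],
      by simpa⟩
  · obtain ⟨γ, α, β, rfl, rfl, hα, rfl, rfl, hacc⟩ := hP
    exact .inr ⟨_, [a], [], rfl, γ, α, β ++ [a], by simp, rfl, hα,
      (A1.eval_append_singleton _ a).symm, rfl, by simpa [DFA.evalFrom_of_append]⟩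
  · obtain ⟨γ, α, β, rfl, rfl, hα, rfl, rfl, hacc⟩ := hP
    refine .inl ⟨[], rfl, γ, α, β, by simp, hα, ?_⟩
    simpa [DFA.eval, DFA.evalFrom_of_append] using hacc

lemma derives_outer (γ : List σ) (p : Q1 × Q2) :
    (grammar bar A1 A2 κ).Derives [.nonterminal (.inl p)]
      (γ.map .terminal ++ [.nonterminal (.inl (A1.evalFrom p.1 γ, A2.evalFrom p.2 γ))] ++
        (ovr bar γ).map .terminal) := by
  induction γ generalizing p with
  | nil => exact .refl _
  | cons a γ ih =>
    have hr : outerRule bar A1 A2 p a ∈ (grammar bar A1 A2 κ).rules :=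
      mem_rules.2 (.inl ⟨p, a, rfl⟩)
    refine (produces_input_output hr).trans_derives ?_
    simpa [outerRule, linear] using
      ((ih (A1.step p.1 a, A2.step p.2 a)).append_left [.terminal a]).append_right
        [.terminal (bar a)]

lemma derives_loop (β : List σ) (q s : Q1) (t u : Q2) :
    (grammar bar A1 A2 κ).Derives [.nonterminal (.inr (q, s, t, A2.evalFrom u (ovr bar β)))]
      (β.map .terminal ++ [.nonterminal (.inr (A1.evalFrom q β, s, t, u))]) := by
  induction β generalizing q with
  | nil => exact .refl _
  | cons a β ih =>
    have hr : loopRule bar A1 A2 (q, s, t, A2.evalFrom u (ovr bar β)) a ∈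
        (grammar bar A1 A2 κ).rules :=
      mem_rules.2 (.inr (.inr (.inl ⟨_, a, rfl⟩)))
    rw [ovr_cons, DFA.evalFrom_append_singleton]
    refine (produces_input_output hr).trans_derives ?_
    simpa [loopRule, linear] using (ih (A1.step q a)).append_left [.terminal a]

lemma hairpinLanguage_le_language :
    hairpinLanguage bar A1 A2 κ ≤ (grammar bar A1 A2 κ).language := by
  rintro _ ⟨γ, α, β, rfl, hα, hacc⟩
  have hstem : stemRule bar A1 A2 (A1.eval γ, A2.eval γ) (A1.eval (γ ++ α ++ β))
      (A2.eval (γ ++ α ++ ovr bar β)) α ∈ (grammar bar A1 A2 κ).rules :=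
    mem_rules.2 (.inr (.inl ⟨_, _, _, _, hα, hacc, rfl⟩))
  have hclose : closeRule (A1.eval (γ ++ α ++ β)) (A2.eval (γ ++ α)) ∈
      (grammar bar A1 A2 κ).rules :=
    mem_rules.2 (.inr (.inr (.inr ⟨_, _, rfl⟩)))
  have outer := derives_outer (bar := bar) (A1 := A1) (A2 := A2) (κ := κ) γ (A1.start, A2.start)
  have stem := ((produces_input_output hstem).append_left (γ.map .terminal)).append_right
    ((ovr bar γ).map .terminal)
  have loop := ((derives_loop (bar := bar) (A1 := A1) (A2 := A2) (κ := κ) β (A1.eval (γ ++ α))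
    (A1.eval (γ ++ α ++ β)) (A2.eval (γ ++ α)) (A2.eval (γ ++ α))).append_left
      ((γ ++ α).map .terminal)).append_right ((ovr bar α ++ ovr bar γ).map .terminal)
  have close := ((produces_input_output hclose).append_left
    ((γ ++ α ++ β).map .terminal)).append_right ((ovr bar α ++ ovr bar γ).map .terminal)
  refine (mem_language_iff _ _).2 ?_
  simp only [stemRule, closeRule, linear, terminating, DFA.eval, DFA.evalFrom_of_append,
    List.map_append, List.append_assoc, List.cons_append, List.nil_append, List.append_nil,
    List.map_nil] at outer stem loop close ⊢
  exact ((outer.trans_produces stem).trans loop).trans_produces close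

theorem language_grammar : (grammar bar A1 A2 κ).language = hairpinLanguage bar A1 A2 κ :=
  le_antisymm language_le_hairpinLanguage hairpinLanguage_le_language

end Grammar

variable {bar A1 A2 κ}

lemma stemAccepts_eval_iff (γ α β : List σ) :
    StemAccepts bar A1 A2 (A1.eval (γ ++ α ++ β)) (A2.eval (γ ++ α ++ ovr bar β)) α ↔
      γ ++ α ++ β ++ ovr bar α ∈ A1.accepts ∨ γ ++ α ++ ovr bar β ++ ovr bar α ∈ A2.accepts := by
  simp only [StemAccepts, DFA.mem_accepts, DFA.eval, DFA.evalFrom_of_append]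

theorem hairpinLanguage_eq_hairpinCompletion (hbar : Function.Involutive bar)
    {L1 L2 : Language σ} (hA1 : A1.accepts = L1)
    (hA2 : A2.accepts = {w | ∃ v ∈ L2, w = ovr bar v}) :
    hairpinLanguage bar A1 A2 κ = hairpinCompletion bar κ L1 L2 := by
  ext π
  rw [mem_hairpinCompletion_iff]
  refine exists₃_congr fun γ α β => and_congr_right fun _ => and_congr_right fun _ => ?_
  rw [stemAccepts_eval_iff, hA1, hA2]
  refine or_congr_right ((exists_mem_eq_ovr_iff hbar).trans ?_)
  simp [ovr_ovr hbar]

end HairpinGrammar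

theorem hairpin_completion_linear_grammar_size_general
    {σ : Type} [Fintype σ]
    (bar : σ → σ) (hbar : ∀ a, bar (bar a) = a)
    (κ : ℕ)
    (L1 L2 : Language σ)
    (Q1 Q2 : Type) [Fintype Q1] [Fintype Q2]
    (A1 : DFA σ Q1) (A2 : DFA σ Q2)
    (hA1 : A1.accepts = L1)
    (hA2 : A2.accepts = { w : List σ | ∃ v ∈ L2, w = ovr bar v }) :
    ∃ G : ContextFreeGrammar σ,
      G.language = hairpinCompletion bar κ L1 L2 ∧
      (∀ r ∈ G.rules, r.output.countP isNonterminal ≤ 1) ∧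
      G.rules.card ≤
        (Fintype.card σ ^ κ + 2 * Fintype.card σ) *
          (Fintype.card Q1) ^ 2 * (Fintype.card Q2) ^ 2 +
        Fintype.card Q1 * Fintype.card Q2 := by
  refine ⟨HairpinGrammar.grammar bar A1 A2 κ, ?_,
    fun _ => HairpinGrammar.countP_isNonterminal_le_one, HairpinGrammar.card_rules_le⟩
  rw [HairpinGrammar.language_grammar]
  exact HairpinGrammar.hairpinLanguage_eq_hairpinCompletion hbar hA1 hA2

theorem hairpin_completion_linear_grammar_size
    {σ : Type} [Fintype σ] (hσ : 2 ≤ Fintype.card σ)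
    (bar : σ → σ) (hbar : ∀ a, bar (bar a) = a)
    (κ : ℕ) (hκ : 1 ≤ κ)
    (L1 L2 : Language σ)
    (Q1 Q2 : Type) [Fintype Q1] [Fintype Q2]
    (A1 : DFA σ Q1) (A2 : DFA σ Q2)
    (hA1 : A1.accepts = L1)
    (hA2 : A2.accepts = { w : List σ | ∃ v ∈ L2, w = ovr bar v }) :
    ∃ G : ContextFreeGrammar σ,
      G.language = hairpinCompletion bar κ L1 L2 ∧
      (∀ r ∈ G.rules, r.output.countP isNonterminal ≤ 1) ∧
      G.rules.card ≤
        (Fintype.card σ ^ κ + 2 * Fintype.card σ) *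
          (Fintype.card Q1) ^ 2 * (Fintype.card Q2) ^ 2 +
        Fintype.card Q1 * Fintype.card Q2 :=
  hairpin_completion_linear_grammar_size_general bar hbar κ L1 L2 Q1 Q2 A1 A2 hA1 hA2
end

section
/- Let L₁ and L₂ be regular languages over Σ with L₁ ⊆ ⋃_{α ∈ Σ^κ} Σ*·α·Σ*·overline(α) and L₂ ⊆ ⋃_{α ∈ Σ^κ} α·Σ*·overline(α)·Σ*. Then max(λ_{L₁}, λ_{L₂}) = max(λ_{Mid(L₁,L₂)}, λ_{MGP(L₁,L₂)}). -/
/-- The canonical factorization `(γ, α, β)` of a word `π` of the hairpin completion. -/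
def CanonFact {σ : Type} (bar : σ → σ) (κ : ℕ) (L1 L2 : Language σ)
    (π γ α β : List σ) : Prop :=
  π = γ ++ α ++ β ++ ovr bar α ++ ovr bar γ ∧
  α.length = κ ∧
  (γ ++ α ++ β ++ ovr bar α ∈ L1 ∨ α ++ β ++ ovr bar α ++ ovr bar γ ∈ L2) ∧
  (∀ u : List σ, u <+: π → u ∈ L1 → u <+: γ ++ α ++ β ++ ovr bar α) ∧
  (∀ u : List σ, u <:+ π → u ∈ L2 → u <:+ α ++ β ++ ovr bar α ++ ovr bar γ)

/-- The language of minimal gamma-alpha-prefixes of words of the hairpin completion. -/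
def MGP {σ : Type} (bar : σ → σ) (κ : ℕ) (L1 L2 : Language σ) : Language σ :=
  { p | ∃ π γ α β : List σ, π ∈ hairpinCompletion bar κ L1 L2 ∧
      CanonFact bar κ L1 L2 π γ α β ∧ p = γ ++ α }

/-- The language of middle factors of canonical factorizations of words
of the hairpin completion. -/
def Mid {σ : Type} (bar : σ → σ) (κ : ℕ) (L1 L2 : Language σ) : Language σ :=
  { β | ∃ π γ α : List σ, π ∈ hairpinCompletion bar κ L1 L2 ∧
      CanonFact bar κ L1 L2 π γ α β }

/-- The growth indicator of a language: the infimum of all `λ ≥ 0` such that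
`|L ∩ Σ^m| ≤ c·λ^m` for some constant `c > 0` and all `m`. -/
noncomputable def growthInd {σ : Type} (L : Language σ) : ℝ :=
  sInf { l : ℝ | 0 ≤ l ∧ ∃ c : ℝ, 0 < c ∧
    ∀ m : ℕ, (Set.ncard { w : List σ | w ∈ L ∧ w.length = m } : ℝ) ≤ c * l ^ m }

/-!
Every minimal gamma-alpha-prefix is a factor of a word of `L₁` or the mirror image of a factor of a
word of `L₂`, and every middle factor is a factor of a word of `L₁ ∪ L₂`. In a regular language
every factor already occurs with a context of bounded length, so the parts grow no faster than
the languages.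

Conversely, a word `w = u α v ᾱ` of `L₁` is the left part of the hairpin word `w ū`, and its
canonical factorization `(γ, α, β)` has `w` as a prefix of `γ α β ᾱ`. Cutting `β` between two
positions at which the automata of `L₁` and `L₂` are in the same states (for `L₂` also the set of
states reached from the starting points inside `γ`) gives again a canonical factorization, so `β`
can be shortened until `γ α β ᾱ` exceeds `w` by a bounded amount. Hence `w` is a prefix, with a
bounded extension, of a word of `MGP · Mid · Σ^κ`. The mirror image `π ↦ π̄` turns the problem for
`L₂` into the one for `L₁`: it maps canonical factorizations for `(L₁, L₂)` to those for
`(L̄₂, L̄₁)`, keeping `MGP` and mirroring `Mid`.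
-/

namespace Hairpin

variable {σ : Type}

section Words

variable {bar : σ → σ}

@[simp]
theorem length_ovr (w : List σ) : (ovr bar w).length = w.length := by
  simp [ovr]

@[simp]
theorem ovr_append (x y : List σ) : ovr bar (x ++ y) = ovr bar y ++ ovr bar x := by
  simp [ovr]

theorem ovr_ovr (hbar : Function.Involutive bar) (w : List σ) : ovr bar (ovr bar w) = w := by
  simp [ovr, hbar.comp_self]

theorem ovr_injective (hbar : Function.Injective bar) : Function.Injective (ovr bar) :=
  List.reverse_injective.comp (List.map_injective_iff.2 hbar)

theorem _root_.List.IsPrefix.ovr {u v : List σ} (h : u <+: v) : ovr bar u <:+ ovr bar v :=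
  List.reverse_suffix.2 (h.map bar)

theorem _root_.List.IsSuffix.ovr {u v : List σ} (h : u <:+ v) : ovr bar u <+: ovr bar v :=
  List.reverse_prefix.2 (h.map bar)

theorem exists_eq_append_of_prefix_append {u x z : List σ} (h : u <+: x ++ z)
    (hx : x.length ≤ u.length) : ∃ v, v <+: z ∧ u = x ++ v := by
  obtain ⟨v, rfl⟩ := List.prefix_of_prefix_length_le (List.prefix_append x z) h hx
  exact ⟨v, (List.prefix_append_right_inj x).1 h, rfl⟩

theorem exists_eq_append_of_suffix_append {u s y : List σ} (h : u <:+ s ++ y)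
    (hy : y.length ≤ u.length) : ∃ t, t <:+ s ∧ u = t ++ y := by
  obtain ⟨t, rfl⟩ := List.suffix_of_suffix_length_le (List.suffix_append s y) h hy
  exact ⟨t, List.suffix_append_self_iff.1 h, rfl⟩

end Words

section Automata

variable {Q : Type} (M : DFA σ Q)

theorem _root_.DFA.append_mem_accepts_iff_of_eval_eq {x x' : List σ} (h : M.eval x = M.eval x')
    (y : List σ) : x ++ y ∈ M.accepts ↔ x' ++ y ∈ M.accepts := by
  simp only [DFA.mem_accepts, DFA.eval, DFA.evalFrom_of_append] at h ⊢
  rw [h]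

theorem _root_.DFA.exists_length_lt_evalFrom_eq [Fintype Q] (s : Q) (x : List σ) :
    ∃ x', x'.length < Fintype.card Q ∧ M.evalFrom s x' = M.evalFrom s x := by
  induction hn : x.length using Nat.strong_induction_on generalizing x with
  | _ n ih =>
  by_cases hx : x.length < Fintype.card Q
  · exact ⟨x, hx, rfl⟩
  obtain ⟨q, a, b, c, rfl, -, hb, ha, -, hc⟩ := M.evalFrom_split (not_lt.1 hx) rfl
  have hlt : (a ++ c).length < n := by
    have := List.length_pos_of_ne_nil hb
    simp only [List.length_append] at hn ⊢
    omega
  obtain ⟨x', hx', he⟩ := ih _ hlt (a ++ c) rfl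
  refine ⟨x', hx', he.trans ?_⟩
  rw [DFA.evalFrom_of_append, ha, hc]

theorem _root_.DFA.exists_short_context [Fintype Q] {x q y : List σ}
    (h : x ++ q ++ y ∈ M.accepts) :
    ∃ x' y', x'.length < Fintype.card Q ∧ y'.length < Fintype.card Q ∧
      x' ++ q ++ y' ∈ M.accepts := by
  obtain ⟨x', hx', hex⟩ := M.exists_length_lt_evalFrom_eq M.start x
  obtain ⟨y', hy', hey⟩ := M.exists_length_lt_evalFrom_eq (M.evalFrom M.start (x' ++ q)) y
  refine ⟨x', y', hx', hy', ?_⟩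
  rw [List.append_assoc, ← M.append_mem_accepts_iff_of_eval_eq hex, ← List.append_assoc] at h
  rw [DFA.mem_accepts, DFA.eval, DFA.evalFrom_of_append] at h ⊢
  rwa [hey]

end Automata

/-- The preimage of `L` under `w ↦ ovr bar w`; for an involution `bar` it is the image `L̄`. -/
def mirror (bar : σ → σ) (L : Language σ) : Language σ := {w | ovr bar w ∈ L}

def infixes (L : Language σ) : Language σ := {q | ∃ w ∈ L, q <:+: w}

def wordsOfLength (n : ℕ) : Language σ := {v | v.length = n}

def shortContextFactors (L : Language σ) (N : ℕ) : Language σ :=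
  {q | ∃ x y : List σ, x.length < N ∧ y.length < N ∧ x ++ q ++ y ∈ L}

theorem _root_.Language.IsRegular.mirror {L : Language σ} (h : L.IsRegular) (bar : σ → σ) :
    (mirror bar L).IsRegular := by
  obtain ⟨Q, _, M, hM⟩ := h.reverse
  exact ⟨Q, inferInstance, M.comap bar, by rw [DFA.accepts_comap, hM]; rfl⟩

theorem _root_.Language.IsRegular.exists_infixes_le {L : Language σ} (h : L.IsRegular) :
    ∃ N, infixes L ≤ shortContextFactors L N := by
  obtain ⟨Q, _, M, rfl⟩ := h
  exact ⟨Fintype.card Q, fun q ⟨w, hw, x, y, hxy⟩ => M.exists_short_context (hxy ▸ hw)⟩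

section Growth

open Finset

def slice (L : Language σ) (m : ℕ) : Set (List σ) := {w | w ∈ L ∧ w.length = m}

def IsGrowthBound (L : Language σ) (l : ℝ) : Prop :=
  0 ≤ l ∧ ∃ c : ℝ, 0 < c ∧ ∀ m : ℕ, ((slice L m).ncard : ℝ) ≤ c * l ^ m

theorem growthInd_eq_sInf (L : Language σ) : growthInd L = sInf {l | IsGrowthBound L l} := rfl

theorem slice_finite [Finite σ] (L : Language σ) (m : ℕ) : (slice L m).Finite :=
  (List.finite_length_eq σ m).subset fun _ h => h.2

theorem ncard_slice_le [Fintype σ] (L : Language σ) (m : ℕ) :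
    (slice L m).ncard ≤ Fintype.card σ ^ m := by
  refine (Set.ncard_le_ncard (fun _ h => h.2) (List.finite_length_eq σ m)).trans_eq ?_
  rw [← Nat.card_coe_set_eq, ← card_vector m]
  exact Nat.card_eq_fintype_card (α := List.Vector σ m)

theorem _root_.Set.ncard_le_sum_of_subset_biUnion_image {ι α β : Type*} {S : Set β} (s : Finset ι)
    (f : ι → α → β) (T : ι → Set α) (hS : S ⊆ ⋃ i ∈ s, f i '' T i)
    (hT : ∀ i ∈ s, (T i).Finite) : S.ncard ≤ ∑ i ∈ s, (T i).ncard :=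
  calc S.ncard ≤ (⋃ i ∈ s, f i '' T i).ncard :=
        Set.ncard_le_ncard hS (s.finite_toSet.biUnion fun i hi => (hT i hi).image _)
    _ ≤ ∑ i ∈ s, (f i '' T i).ncard := s.set_ncard_biUnion_le _
    _ ≤ ∑ i ∈ s, (T i).ncard := sum_le_sum fun i hi => Set.ncard_image_le (hT i hi)

theorem pow_add_le_mul_pow {l : ℝ} (hl : 0 ≤ l) {k K : ℕ} (hk : k ≤ K) (n : ℕ) :
    l ^ (n + k) ≤ (1 + l) ^ K * l ^ n := by
  rw [pow_add, mul_comm]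
  gcongr
  calc l ^ k ≤ (1 + l) ^ k := by gcongr; linarith
    _ ≤ (1 + l) ^ K := pow_le_pow_right₀ (by linarith) hk

namespace IsGrowthBound

variable {L L' : Language σ} {l l' : ℝ}

theorem mono (h : IsGrowthBound L l) (hl : l ≤ l') : IsGrowthBound L l' := by
  obtain ⟨h0, c, hc, hb⟩ := h
  exact ⟨h0.trans hl, c, hc, fun m => (hb m).trans (by gcongr)⟩

theorem anti [Finite σ] (h : IsGrowthBound L' l) (hL : L ≤ L') : IsGrowthBound L l := by
  obtain ⟨h0, c, hc, hb⟩ := h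
  refine ⟨h0, c, hc, fun m => le_trans ?_ (hb m)⟩
  exact_mod_cast Set.ncard_le_ncard (s := slice L m) (t := slice L' m)
    (fun w hw => ⟨hL hw.1, hw.2⟩) (slice_finite L' m)

theorem add [Finite σ] (h : IsGrowthBound L l) (h' : IsGrowthBound L' l) :
    IsGrowthBound (L + L') l := by
  obtain ⟨h0, c, hc, hb⟩ := h
  obtain ⟨-, c', hc', hb'⟩ := h'
  refine ⟨h0, c + c', by positivity, fun m => ?_⟩
  have hsub : slice (L + L') m ⊆ slice L m ∪ slice L' m := by
    rintro w ⟨hw | hw, hm⟩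
    exacts [Or.inl ⟨hw, hm⟩, Or.inr ⟨hw, hm⟩]
  calc ((slice (L + L') m).ncard : ℝ) ≤ ((slice L m).ncard + (slice L' m).ncard : ℕ) := by
        exact_mod_cast (Set.ncard_le_ncard hsub ((slice_finite L m).union
          (slice_finite L' m))).trans (Set.ncard_union_le _ _)
    _ ≤ (c + c') * l ^ m := by push_cast; linarith [hb m, hb' m]

theorem mirror [Finite σ] {bar : σ → σ} (hbar : Function.Injective bar)
    (h : IsGrowthBound L l) : IsGrowthBound (Hairpin.mirror bar L) l := by
  obtain ⟨h0, c, hc, hb⟩ := h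
  refine ⟨h0, c, hc, fun m => le_trans ?_ (hb m)⟩
  exact_mod_cast Set.ncard_le_ncard_of_injOn (s := slice (Hairpin.mirror bar L) m)
    (t := slice L m) (ovr bar) (fun w ⟨hw, hm⟩ => ⟨hw, by simpa using hm⟩)
    (ovr_injective hbar).injOn (slice_finite L m)

theorem shortContextFactors [Finite σ] (h : IsGrowthBound L l) (N : ℕ) :
    IsGrowthBound (Hairpin.shortContextFactors L N) l := by
  obtain ⟨h0, c, hc, hb⟩ := h
  refine ⟨h0, (N * N) * (c * (1 + l) ^ (2 * N)) + 1, by positivity, fun n => ?_⟩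
  have hcover : slice (Hairpin.shortContextFactors L N) n ⊆ ⋃ ab ∈ range N ×ˢ range N,
      (fun w => (w.drop ab.1).take n) '' slice L (ab.1 + n + ab.2) := by
    rintro q ⟨⟨x, y, hx, hy, hxqy⟩, rfl⟩
    simp only [Set.mem_iUnion, Set.mem_image, mem_product, mem_range]
    exact ⟨(x.length, y.length), ⟨hx, hy⟩, x ++ q ++ y, ⟨hxqy, by simp [Nat.add_assoc]⟩,
      by simp⟩
  have hterm : ∀ ab ∈ range N ×ˢ range N,
      ((slice L (ab.1 + n + ab.2)).ncard : ℝ) ≤ c * (1 + l) ^ (2 * N) * l ^ n := by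
    intro ab hab
    rw [mem_product, mem_range, mem_range] at hab
    calc _ ≤ c * l ^ (n + (ab.1 + ab.2)) := by
          rw [show ab.1 + n + ab.2 = n + (ab.1 + ab.2) by ring]
          exact hb _
      _ ≤ c * ((1 + l) ^ (2 * N) * l ^ n) := by gcongr; exact pow_add_le_mul_pow h0 (by omega) n
      _ = _ := by ring
  calc ((slice (Hairpin.shortContextFactors L N) n).ncard : ℝ)
      ≤ ∑ ab ∈ range N ×ˢ range N, ((slice L (ab.1 + n + ab.2)).ncard : ℝ) := by
        exact_mod_cast Set.ncard_le_sum_of_subset_biUnion_image _ _ _ hcover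
          fun _ _ => slice_finite L _
    _ ≤ ∑ _ab ∈ range N ×ˢ range N, c * (1 + l) ^ (2 * N) * l ^ n := sum_le_sum hterm
    _ ≤ ((N * N) * (c * (1 + l) ^ (2 * N)) + 1) * l ^ n := by
        rw [sum_const, card_product, card_range, nsmul_eq_mul]
        push_cast
        nlinarith [pow_nonneg h0 n]

theorem mul [Finite σ] {P Q : Language σ} (hP : IsGrowthBound P l) (hQ : IsGrowthBound Q l')
    (hll' : l < l') : IsGrowthBound (P * Q) l' := by
  obtain ⟨h0, c, hc, hb⟩ := hP
  obtain ⟨-, c', hc', hb'⟩ := hQ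
  have hl' : 0 < l' := h0.trans_lt hll'
  -- the convolution of the two bounds is dominated by the geometric series in `l / l'`
  set r := l / l' with hr
  have hr0 : 0 ≤ r := div_nonneg h0 hl'.le
  have hr1 : r < 1 := (div_lt_one hl').2 hll'
  refine ⟨hl'.le, c * c' / (1 - r), div_pos (by positivity) (by linarith), fun s => ?_⟩
  have hcover : slice (P * Q) s ⊆ ⋃ ij ∈ antidiagonal s,
      (fun pq : List σ × List σ => pq.1 ++ pq.2) '' (slice P ij.1 ×ˢ slice Q ij.2) := by
    rintro w ⟨hw, rfl⟩
    obtain ⟨p, hp, q, hq, rfl⟩ := Language.mem_mul.1 hw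
    simp only [Set.mem_iUnion, Set.mem_image, HasAntidiagonal.mem_antidiagonal]
    exact ⟨(p.length, q.length), by simp, (p, q), ⟨⟨hp, rfl⟩, ⟨hq, rfl⟩⟩, rfl⟩
  have hterm : ∀ ij ∈ antidiagonal s,
      (c * l ^ ij.1) * (c' * l' ^ ij.2) = c * c' * l' ^ s * r ^ ij.1 := by
    intro ij hij
    rw [HasAntidiagonal.mem_antidiagonal] at hij
    rw [← hij, hr, div_pow, pow_add]
    field_simp
  calc ((slice (P * Q) s).ncard : ℝ)
      ≤ ∑ ij ∈ antidiagonal s, ((slice P ij.1).ncard * (slice Q ij.2).ncard : ℝ) := by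
        have := Set.ncard_le_sum_of_subset_biUnion_image _ _ _ hcover
          fun _ _ => (slice_finite P _).prod (slice_finite Q _)
        simp only [Set.ncard_prod] at this
        exact_mod_cast this
    _ ≤ ∑ ij ∈ antidiagonal s, (c * l ^ ij.1) * (c' * l' ^ ij.2) := by
        exact sum_le_sum fun ij _ =>
          mul_le_mul (hb _) (hb' _) (Nat.cast_nonneg _) (by positivity)
    _ = c * c' * l' ^ s * ∑ k ∈ range (s + 1), r ^ k := by
        rw [sum_congr rfl hterm, ← mul_sum, Nat.sum_antidiagonal_eq_sum_range_succ_mk]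
    _ ≤ c * c' * l' ^ s * (1 / (1 - r)) := by
        refine mul_le_mul_of_nonneg_left ?_ (by positivity)
        have := geom_sum_Ico_le_of_lt_one (m := 0) (n := s + 1) hr0 hr1
        rwa [← range_eq_Ico, pow_zero] at this
    _ = c * c' / (1 - r) * l' ^ s := by ring

end IsGrowthBound

theorem isGrowthBound_wordsOfLength [Fintype σ] (κ : ℕ) {l : ℝ} (hl : 0 < l) :
    IsGrowthBound (wordsOfLength κ : Language σ) l := by
  refine ⟨hl.le, (Fintype.card σ ^ κ + 1) / l ^ κ, by positivity, fun m => ?_⟩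
  rcases eq_or_ne m κ with rfl | hm
  · rw [div_mul_cancel₀ _ (by positivity)]
    exact_mod_cast (ncard_slice_le _ m).trans (Nat.le_succ _)
  · have : slice (wordsOfLength κ : Language σ) m = ∅ :=
      Set.eq_empty_of_forall_notMem fun v hv => hm (hv.2.symm.trans hv.1)
    rw [this, Set.ncard_empty, Nat.cast_zero]
    positivity

theorem isGrowthBound_card [Fintype σ] (L : Language σ) : IsGrowthBound L (Fintype.card σ) :=
  ⟨by positivity, 1, one_pos, fun m => by rw [one_mul]; exact_mod_cast ncard_slice_le L m⟩

theorem growthInd_nonneg (L : Language σ) : 0 ≤ growthInd L :=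
  Real.sInf_nonneg fun _ h => h.1

theorem IsGrowthBound.growthInd_le {L : Language σ} {l : ℝ} (h : IsGrowthBound L l) :
    growthInd L ≤ l :=
  csInf_le ⟨0, fun _ h => h.1⟩ h

theorem IsGrowthBound.of_growthInd_lt [Fintype σ] {L : Language σ} {l : ℝ}
    (h : growthInd L < l) : IsGrowthBound L l := by
  rw [growthInd_eq_sInf] at h
  obtain ⟨x, hx, hxl⟩ :=
    exists_lt_of_csInf_lt (s := {l | IsGrowthBound L l}) ⟨_, isGrowthBound_card L⟩ h
  exact hx.mono hxl.le

theorem max_growthInd_le_max_growthInd [Fintype σ] {A B C D : Language σ}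
    (h : ∀ l l', 0 < l → l < l' → IsGrowthBound C l → IsGrowthBound D l →
      IsGrowthBound A l' ∧ IsGrowthBound B l') :
    max (growthInd A) (growthInd B) ≤ max (growthInd C) (growthInd D) := by
  refine le_of_forall_gt_imp_ge_of_dense fun l' hl' => ?_
  set l := (max (growthInd C) (growthInd D) + l') / 2 with hl
  have hC := le_max_left (growthInd C) (growthInd D)
  have hD := le_max_right (growthInd C) (growthInd D)
  have h0 := growthInd_nonneg C
  obtain ⟨hA, hB⟩ := h l l' (by linarith) (by linarith)
    (.of_growthInd_lt (by linarith)) (.of_growthInd_lt (by linarith))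
  exact max_le hA.growthInd_le hB.growthInd_le

end Growth

section HairpinCompletion

variable {bar : σ → σ} {κ : ℕ} {L1 L2 : Language σ}

theorem CanonFact.mem_hairpinCompletion {π γ α β : List σ}
    (h : CanonFact bar κ L1 L2 π γ α β) : π ∈ hairpinCompletion bar κ L1 L2 :=
  ⟨γ, α, β, h.1, h.2.1.ge, h.2.2.1⟩

theorem mem_MGP_iff {p : List σ} :
    p ∈ MGP bar κ L1 L2 ↔ ∃ π γ α β, CanonFact bar κ L1 L2 π γ α β ∧ p = γ ++ α :=
  ⟨fun ⟨π, γ, α, β, _, h, hp⟩ => ⟨π, γ, α, β, h, hp⟩,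
    fun ⟨π, γ, α, β, h, hp⟩ => ⟨π, γ, α, β, CanonFact.mem_hairpinCompletion h, h, hp⟩⟩

theorem mem_Mid_iff {q : List σ} :
    q ∈ Mid bar κ L1 L2 ↔ ∃ π γ α, CanonFact bar κ L1 L2 π γ α q :=
  ⟨fun ⟨π, γ, α, _, h⟩ => ⟨π, γ, α, h⟩,
    fun ⟨π, γ, α, h⟩ => ⟨π, γ, α, CanonFact.mem_hairpinCompletion h, h⟩⟩

theorem exists_hairpin_shape (γ δ α₀ β₀ : List σ) (hα₀ : κ ≤ α₀.length) :
    ∃ α β, α.length = κ ∧ γ ++ δ ++ α₀ ++ β₀ ++ ovr bar α₀ ++ ovr bar (γ ++ δ) =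
      γ ++ α ++ β ++ ovr bar α ++ ovr bar γ := by
  obtain ⟨α, y, hx, hα⟩ : ∃ α y, δ ++ α₀ = α ++ y ∧ α.length = κ :=
    ⟨_, _, (List.take_append_drop κ _).symm, by
      simp only [List.length_take, List.length_append]; omega⟩
  refine ⟨α, y ++ β₀ ++ ovr bar y, hα, ?_⟩
  have hx' : ovr bar α₀ ++ ovr bar δ = ovr bar y ++ ovr bar α := by
    rw [← ovr_append, ← ovr_append, hx]
  calc γ ++ δ ++ α₀ ++ β₀ ++ ovr bar α₀ ++ ovr bar (γ ++ δ)
      = γ ++ (δ ++ α₀) ++ β₀ ++ (ovr bar α₀ ++ ovr bar δ) ++ ovr bar γ := by simp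
    _ = γ ++ α ++ (y ++ β₀ ++ ovr bar y) ++ ovr bar α ++ ovr bar γ := by rw [hx, hx']; simp

theorem exists_canonFact {π : List σ} (hπ : π ∈ hairpinCompletion bar κ L1 L2) :
    ∃ γ α β, CanonFact bar κ L1 L2 π γ α β := by
  classical
  obtain ⟨γ₀, α₀, β₀, hπ, hα₀, hw⟩ := hπ
  set n := π.length with hn
  let good : ℕ → Prop := fun ℓ => π.take ℓ ∈ L1 ∨ π.drop (n - ℓ) ∈ L2
  have hn₀ : n = γ₀.length + α₀.length + β₀.length + α₀.length + γ₀.length := by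
    simp only [hn, hπ, List.length_append, length_ovr]
  have hgood₀ : good (n - γ₀.length) := by
    have h1 : π.take (n - γ₀.length) = γ₀ ++ α₀ ++ β₀ ++ ovr bar α₀ := by
      rw [hπ, List.take_left']; simp only [List.length_append, length_ovr]; omega
    have h2 : π.drop (n - (n - γ₀.length)) = α₀ ++ β₀ ++ ovr bar α₀ ++ ovr bar γ₀ := by
      rw [show n - (n - γ₀.length) = γ₀.length by omega, hπ]; simp
    simpa only [good, h1, h2] using hw
  set M := Nat.findGreatest good n
  have hM₀ : n - γ₀.length ≤ M := Nat.le_findGreatest (by omega) hgood₀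
  have hM : good M := Nat.findGreatest_spec (by omega : n - γ₀.length ≤ n) hgood₀
  have hMn : M ≤ n := Nat.findGreatest_le n
  obtain ⟨α, β, hα, hshape⟩ := exists_hairpin_shape (bar := bar)
    (γ₀.take (n - M)) (γ₀.drop (n - M)) α₀ β₀ hα₀
  set γ := γ₀.take (n - M)
  rw [List.take_append_drop, ← hπ] at hshape
  have hγ : γ.length = n - M := by simp only [γ, List.length_take]; omega
  have hlen : n = γ.length + α.length + β.length + α.length + γ.length := by
    simp only [hn, hshape, List.length_append, length_ovr]
  have htake : π.take M = γ ++ α ++ β ++ ovr bar α := by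
    rw [hshape, List.take_left']; simp only [List.length_append, length_ovr]; omega
  have hdrop : π.drop (n - M) = α ++ β ++ ovr bar α ++ ovr bar γ := by
    rw [← hγ, hshape]; simp
  refine ⟨γ, α, β, hshape, hα, ?_, fun u hu huL => ?_, fun u hu huL => ?_⟩
  · rw [← htake, ← hdrop]
    exact hM
  · have hu' : u.length ≤ M := Nat.le_findGreatest (hn ▸ hu.length_le)
      (Or.inl (List.prefix_iff_eq_take.1 hu ▸ huL))
    rw [← htake]
    exact List.prefix_of_prefix_length_le hu (List.take_prefix M π)
      (by rw [List.length_take]; omega)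
  · have hu' : u.length ≤ M := Nat.le_findGreatest (hn ▸ hu.length_le)
      (Or.inr (List.suffix_iff_eq_drop.1 hu ▸ huL))
    rw [← hdrop]
    exact List.suffix_of_suffix_length_le hu (List.drop_suffix _ π)
      (by rw [List.length_drop]; omega)

theorem MGP_le : MGP bar κ L1 L2 ≤ infixes L1 + mirror bar (infixes L2) := by
  rintro _ ⟨π, γ, α, β, -, ⟨-, -, h | h, -, -⟩, rfl⟩
  · exact Or.inl ⟨_, h, List.IsPrefix.isInfix ⟨β ++ ovr bar α, by simp⟩⟩
  · exact Or.inr ⟨_, h, List.IsSuffix.isInfix ⟨α ++ β, by simp⟩⟩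

theorem Mid_le : Mid bar κ L1 L2 ≤ infixes L1 + infixes L2 := by
  rintro β ⟨π, γ, α, -, -, -, h | h, -, -⟩
  · exact Or.inl ⟨_, h, γ ++ α, ovr bar α, rfl⟩
  · exact Or.inr ⟨_, h, α, ovr bar α ++ ovr bar γ, by simp⟩

theorem IsGrowthBound.infixes [Finite σ] {L : Language σ} {l : ℝ} (hL : L.IsRegular)
    (h : IsGrowthBound L l) : IsGrowthBound (infixes L) l := by
  obtain ⟨N, hN⟩ := hL.exists_infixes_le
  exact (h.shortContextFactors N).anti hN

theorem isGrowthBound_parts [Finite σ] (hbar : Function.Injective bar)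
    (h1 : L1.IsRegular) (h2 : L2.IsRegular) {l : ℝ}
    (hL1 : IsGrowthBound L1 l) (hL2 : IsGrowthBound L2 l) :
    IsGrowthBound (Mid bar κ L1 L2) l ∧ IsGrowthBound (MGP bar κ L1 L2) l :=
  ⟨((hL1.infixes h1).add (hL2.infixes h2)).anti Mid_le,
    ((hL1.infixes h1).add ((hL2.infixes h2).mirror hbar)).anti MGP_le⟩

section Pumping

variable {Q1 Q2 : Type} (M1 : DFA σ Q1) (M2 : DFA σ Q2)

/-- Collecting the states reached from the starting points inside `γ` as a set keeps the number of
profiles independent of `γ`. -/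
def profile (γ α t : List σ) : Q1 × Q2 × Set Q2 :=
  (M1.eval (γ ++ α ++ t), M2.eval (α ++ t),
    {q | ∃ s, s <:+ γ ∧ s ≠ [] ∧ M2.eval (s ++ α ++ t) = q})

theorem canonFact_exchange {γ α t₁ t₂ r : List σ}
    (h : CanonFact bar κ M1.accepts M2.accepts
      (γ ++ α ++ (t₂ ++ r) ++ ovr bar α ++ ovr bar γ) γ α (t₂ ++ r))
    (ht : profile M1 M2 γ α t₁ = profile M1 M2 γ α t₂) :
    CanonFact bar κ M1.accepts M2.accepts
      (γ ++ α ++ (t₁ ++ r) ++ ovr bar α ++ ovr bar γ) γ α (t₁ ++ r) := by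
  obtain ⟨-, hα, hw, hpre, hsuf⟩ := h
  simp only [profile, Prod.mk.injEq] at ht
  obtain ⟨h1, h2, h3⟩ := ht
  set z := r ++ ovr bar α ++ ovr bar γ
  refine ⟨rfl, hα, ?_, fun u hu huL => ?_, fun u hu huL => ?_⟩
  · have e1 : ∀ t, γ ++ α ++ (t ++ r) ++ ovr bar α = γ ++ α ++ t ++ (r ++ ovr bar α) := by
      simp
    have e2 : ∀ t, α ++ (t ++ r) ++ ovr bar α ++ ovr bar γ = α ++ t ++ z := by simp [z]
    rw [e1, e2, M1.append_mem_accepts_iff_of_eval_eq h1, M2.append_mem_accepts_iff_of_eval_eq h2,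
      ← e1, ← e2]
    exact hw
  · refine List.prefix_of_prefix_length_le hu ⟨ovr bar γ, rfl⟩ (not_lt.1 fun hlong => ?_)
    obtain ⟨v, hv, rfl⟩ := exists_eq_append_of_prefix_append (x := γ ++ α ++ t₁) (z := z)
      (by simpa [z] using hu) (by simp only [List.length_append, length_ovr] at hlong ⊢; omega)
    have hv' := (M1.append_mem_accepts_iff_of_eval_eq h1 v).1 huL
    have := (hpre _ (by simpa [z] using (List.prefix_append_right_inj (γ ++ α ++ t₂)).2 hv)
      hv').length_le
    simp only [List.length_append, length_ovr] at this hlong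
    omega
  · refine List.suffix_of_suffix_length_le hu ⟨γ, by simp⟩ (not_lt.1 fun hlong => ?_)
    obtain ⟨s, hs, rfl⟩ := exists_eq_append_of_suffix_append (s := γ) (y := α ++ t₁ ++ z)
      (by simpa [z] using hu) (by simp only [z, List.length_append, length_ovr] at hlong ⊢; omega)
    have hsne : s ≠ [] := by
      rintro rfl
      simp [z] at hlong
    obtain ⟨s', hs', hs'ne, he⟩ : M2.eval (s ++ α ++ t₁) ∈
        {q | ∃ s', s' <:+ γ ∧ s' ≠ [] ∧ M2.eval (s' ++ α ++ t₂) = q} :=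
      h3 ▸ ⟨s, hs, hsne, rfl⟩
    have hu' : s' ++ α ++ t₂ ++ z ∈ M2.accepts :=
      (M2.append_mem_accepts_iff_of_eval_eq he z).2 (by simpa using huL)
    have hu'π : s' ++ α ++ t₂ ++ z <:+ γ ++ α ++ (t₂ ++ r) ++ ovr bar α ++ ovr bar γ := by
      simpa [z] using (List.suffix_append_self_iff (l₃ := α ++ t₂ ++ z)).2 hs'
    have hlen := (hsuf _ hu'π hu').length_le
    have := List.length_pos_of_ne_nil hs'ne
    simp only [z, List.length_append, length_ovr] at hlen
    omega

theorem exists_canonFact_short_middle [Fintype Q1] [Fintype Q2] {γ α β w : List σ}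
    (h : CanonFact bar κ M1.accepts M2.accepts
      (γ ++ α ++ β ++ ovr bar α ++ ovr bar γ) γ α β)
    (hw : w <+: γ ++ α ++ β ++ ovr bar α) (hwl : (γ ++ α).length ≤ w.length) :
    ∃ β', CanonFact bar κ M1.accepts M2.accepts
      (γ ++ α ++ β' ++ ovr bar α ++ ovr bar γ) γ α β' ∧
      w <+: γ ++ α ++ β' ++ ovr bar α ∧
      (γ ++ α ++ β').length ≤ w.length + Nat.card (Q1 × Q2 × Set Q2) := by
  classical
  induction hn : β.length using Nat.strong_induction_on generalizing β with
  | _ n ih =>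
  set C := Nat.card (Q1 × Q2 × Set Q2)
  by_cases hshort : (γ ++ α ++ β).length ≤ w.length + C
  · exact ⟨β, h, hw, hshort⟩
  obtain ⟨k, hk⟩ := Nat.exists_eq_add_of_le hwl
  simp only [List.length_append] at hk hshort
  have hkC : k + C < β.length := by omega
  obtain ⟨i, j, hne, he⟩ := Fintype.exists_ne_map_eq_of_card_lt
    (fun i : Fin (C + 1) => profile M1 M2 γ α (β.take (k + i)))
    (by simp [C, Nat.card_eq_fintype_card])
  wlog hij : i < j generalizing i j
  · exact this j i hne.symm he.symm (lt_of_le_of_ne (not_lt.1 hij) hne.symm)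
  have hj := j.isLt
  have h' := canonFact_exchange M1 M2 (r := β.drop (k + j))
    (by rwa [List.take_append_drop]) he
  refine ih _ ?_ h' ?_ rfl
  · simp only [List.length_append, List.length_take, List.length_drop]
    omega
  · have hwt : w <+: γ ++ α ++ β.take (k + i) :=
      List.prefix_of_prefix_length_le hw
        (by simpa using (List.take_prefix (k + i) β).trans (List.prefix_append _ (ovr bar α)))
        (by simp only [List.length_append, List.length_take]; omega)
    exact hwt.trans (by simp)

end Pumping

theorem exists_le_shortContextFactors (h1 : L1.IsRegular) (h2 : L2.IsRegular)
    (hL1 : ∀ w ∈ L1, ∃ u α v : List σ, α.length = κ ∧ w = u ++ α ++ v ++ ovr bar α) :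
    ∃ N, L1 ≤ shortContextFactors
      (MGP bar κ L1 L2 * Mid bar κ L1 L2 * wordsOfLength κ) N := by
  obtain ⟨Q1, _, M1, rfl⟩ := h1
  obtain ⟨Q2, _, M2, rfl⟩ := h2
  refine ⟨Nat.card (Q1 × Q2 × Set Q2) + κ + 1, fun w hw => ?_⟩
  obtain ⟨u, α₀, v, hα₀, rfl⟩ := hL1 w hw
  obtain ⟨γ, α, β, hcf⟩ := exists_canonFact (bar := bar) (κ := κ) (L1 := M1.accepts)
    (L2 := M2.accepts) ⟨u, α₀, v, rfl, hα₀.ge, Or.inl hw⟩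
  have hwp := hcf.2.2.2.1 _ (List.prefix_append _ (ovr bar u)) hw
  have hwl : (γ ++ α).length ≤ (u ++ α₀ ++ v ++ ovr bar α₀).length := by
    have h := congrArg List.length hcf.1
    have h' := hwp.length_le
    simp only [List.length_append, length_ovr] at h h' ⊢
    omega
  rw [hcf.1] at hcf
  obtain ⟨β', hcf', ⟨y, hy⟩, hlen⟩ := exists_canonFact_short_middle M1 M2 hcf hwp hwl
  refine ⟨[], y, by simp, ?_, ?_⟩
  · have h := congrArg List.length hy
    have hα := hcf'.2.1
    simp only [List.length_append, length_ovr] at h hlen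
    omega
  · rw [List.nil_append, hy]
    exact Language.mem_mul.2 ⟨γ ++ α ++ β', Language.mem_mul.2 ⟨γ ++ α,
      mem_MGP_iff.2 ⟨_, γ, α, β', hcf', rfl⟩, β', mem_Mid_iff.2 ⟨_, γ, α, hcf'⟩, rfl⟩,
      ovr bar α, (length_ovr α).trans hcf'.2.1, rfl⟩

theorem IsGrowthBound.of_parts_left [Fintype σ] (h1 : L1.IsRegular) (h2 : L2.IsRegular)
    (hL1 : ∀ w ∈ L1, ∃ u α v : List σ, α.length = κ ∧ w = u ++ α ++ v ++ ovr bar α)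
    {l l' : ℝ} (hl : 0 < l) (hll' : l < l') (hP : IsGrowthBound (MGP bar κ L1 L2) l)
    (hM : IsGrowthBound (Mid bar κ L1 L2) l) : IsGrowthBound L1 l' := by
  obtain ⟨N, hN⟩ := exists_le_shortContextFactors h1 h2 hL1
  have hPM : IsGrowthBound (MGP bar κ L1 L2 * Mid bar κ L1 L2) ((l + l') / 2) :=
    hP.mul (hM.mono (by linarith)) (by linarith)
  have hPMA := hPM.mul (isGrowthBound_wordsOfLength κ (by linarith)) (by linarith)
  exact (hPMA.shortContextFactors N).anti hN

section Mirror

variable (hbar : Function.Involutive bar)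
include hbar

theorem mirror_mirror (L : Language σ) : mirror bar (mirror bar L) = L :=
  Set.ext fun w => show ovr bar (ovr bar w) ∈ L ↔ w ∈ L by rw [ovr_ovr hbar]

theorem CanonFact.mirror {π γ α β : List σ} (h : CanonFact bar κ L1 L2 π γ α β) :
    CanonFact bar κ (mirror bar L2) (mirror bar L1) (ovr bar π) γ α (ovr bar β) := by
  obtain ⟨rfl, hα, hw, hpre, hsuf⟩ := h
  have e1 : ovr bar (γ ++ α ++ ovr bar β ++ ovr bar α) = α ++ β ++ ovr bar α ++ ovr bar γ := by
    simp [ovr_ovr hbar]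
  have e2 : ovr bar (α ++ ovr bar β ++ ovr bar α ++ ovr bar γ) = γ ++ α ++ β ++ ovr bar α := by
    simp [ovr_ovr hbar]
  refine ⟨by simp [ovr_ovr hbar], hα, ?_, fun u hu huL => ?_, fun u hu huL => ?_⟩
  · show ovr bar _ ∈ L2 ∨ ovr bar _ ∈ L1
    rw [e1, e2]
    exact hw.symm
  · have := (hsuf _ (ovr_ovr hbar (γ ++ α ++ β ++ ovr bar α ++ ovr bar γ) ▸ hu.ovr) huL).ovr
      (bar := bar)
    rwa [ovr_ovr hbar, ← e1, ovr_ovr hbar] at this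
  · have := (hpre _ (ovr_ovr hbar (γ ++ α ++ β ++ ovr bar α ++ ovr bar γ) ▸ hu.ovr) huL).ovr
      (bar := bar)
    rwa [ovr_ovr hbar, ← e2, ovr_ovr hbar] at this

theorem MGP_mirror : MGP bar κ (mirror bar L2) (mirror bar L1) = MGP bar κ L1 L2 := by
  have key : ∀ L1 L2 : Language σ,
      MGP bar κ L1 L2 ≤ MGP bar κ (mirror bar L2) (mirror bar L1) := by
    intro L1 L2 p hp
    obtain ⟨π, γ, α, β, h, rfl⟩ := mem_MGP_iff.1 hp
    exact mem_MGP_iff.2 ⟨_, γ, α, _, CanonFact.mirror hbar h, rfl⟩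
  refine le_antisymm ?_ (key L1 L2)
  simpa only [mirror_mirror hbar] using key (mirror bar L2) (mirror bar L1)

theorem Mid_mirror :
    Mid bar κ (mirror bar L2) (mirror bar L1) = mirror bar (Mid bar κ L1 L2) := by
  have key : ∀ (L1 L2 : Language σ) (q : List σ),
      q ∈ Mid bar κ L1 L2 → ovr bar q ∈ Mid bar κ (mirror bar L2) (mirror bar L1) := by
    intro L1 L2 q hq
    obtain ⟨π, γ, α, h⟩ := mem_Mid_iff.1 hq
    exact mem_Mid_iff.2 ⟨_, γ, α, CanonFact.mirror hbar h⟩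
  ext q
  refine ⟨fun hq => ?_, fun hq => ovr_ovr hbar q ▸ key L1 L2 _ hq⟩
  have := key _ _ q hq
  rw [mirror_mirror hbar, mirror_mirror hbar] at this
  exact this

theorem isGrowthBound_languages [Fintype σ] (h1 : L1.IsRegular) (h2 : L2.IsRegular)
    (hL1 : ∀ w ∈ L1, ∃ u α v : List σ, α.length = κ ∧ w = u ++ α ++ v ++ ovr bar α)
    (hL2 : ∀ w ∈ L2, ∃ α u v : List σ, α.length = κ ∧ w = α ++ u ++ ovr bar α ++ v)
    {l l' : ℝ} (hl : 0 < l) (hll' : l < l') (hM : IsGrowthBound (Mid bar κ L1 L2) l)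
    (hP : IsGrowthBound (MGP bar κ L1 L2) l) : IsGrowthBound L1 l' ∧ IsGrowthBound L2 l' := by
  refine ⟨.of_parts_left h1 h2 hL1 hl hll' hP hM, ?_⟩
  have hL2' : ∀ w ∈ mirror bar L2, ∃ u α v : List σ,
      α.length = κ ∧ w = u ++ α ++ v ++ ovr bar α := by
    intro w hw
    obtain ⟨α, u, v, hα, hw'⟩ := hL2 _ hw
    refine ⟨ovr bar v, α, ovr bar u, hα, ?_⟩
    rw [← ovr_ovr hbar w, hw']
    simp [ovr_ovr hbar]
  have := IsGrowthBound.of_parts_left (h2.mirror bar) (h1.mirror bar) hL2' hl hll'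
    (by rwa [MGP_mirror hbar]) (by rw [Mid_mirror hbar]; exact hM.mirror hbar.injective)
  simpa only [mirror_mirror hbar] using this.mirror hbar.injective

end Mirror

end HairpinCompletion

end Hairpin

theorem growth_of_parts_eq_growth_of_languages_general
    {σ : Type} [Fintype σ]
    (bar : σ → σ) (hbar : ∀ a, bar (bar a) = a)
    (κ : ℕ)
    (L1 L2 : Language σ) (h1 : L1.IsRegular) (h2 : L2.IsRegular)
    (hL1 : ∀ w ∈ L1, ∃ u α v : List σ,
      α.length = κ ∧ w = u ++ α ++ v ++ ovr bar α)
    (hL2 : ∀ w ∈ L2, ∃ α u v : List σ,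
      α.length = κ ∧ w = α ++ u ++ ovr bar α ++ v) :
    max (growthInd L1) (growthInd L2) =
      max (growthInd (Mid bar κ L1 L2)) (growthInd (MGP bar κ L1 L2)) := by
  refine le_antisymm (Hairpin.max_growthInd_le_max_growthInd fun l l' hl hll' hM hP =>
    Hairpin.isGrowthBound_languages hbar h1 h2 hL1 hL2 hl hll' hM hP) ?_
  refine Hairpin.max_growthInd_le_max_growthInd fun l l' _ hll' hL1 hL2 => ?_
  obtain ⟨hM, hP⟩ := Hairpin.isGrowthBound_parts (κ := κ)
    (Function.Involutive.injective hbar) h1 h2 hL1 hL2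
  exact ⟨hM.mono hll'.le, hP.mono hll'.le⟩

theorem growth_of_parts_eq_growth_of_languages
    {σ : Type} [Fintype σ] (hσ : 2 ≤ Fintype.card σ)
    (bar : σ → σ) (hbar : ∀ a, bar (bar a) = a)
    (κ : ℕ) (hκ : 1 ≤ κ)
    (L1 L2 : Language σ) (h1 : L1.IsRegular) (h2 : L2.IsRegular)
    (hL1 : ∀ w ∈ L1, ∃ u α v : List σ,
      α.length = κ ∧ w = u ++ α ++ v ++ ovr bar α)
    (hL2 : ∀ w ∈ L2, ∃ α u v : List σ,
      α.length = κ ∧ w = α ++ u ++ ovr bar α ++ v) :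
    max (growthInd L1) (growthInd L2) =
      max (growthInd (Mid bar κ L1 L2)) (growthInd (MGP bar κ L1 L2)) :=
  growth_of_parts_eq_growth_of_languages_general bar hbar κ L1 L2 h1 h2 hL1 hL2
end
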